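/- Final step of Theorem 1 (collapse of the blocks): Let k ≥ 1, let V_{a,b} (a, b ∈ {0,1}) be k×k complex matrices such that V := Σ_{a,b∈{0,1}} |φ_{a,b}⟩⟨ā, b| ⊗ V_{a,b} is unitary on ℂ⁴ ⊗ ℂ^k, and let ξ be a positive-definite density matrix on ℂ^k. Let |e⟩ = sin(π/8)|0⟩ + cos(π/8)|1⟩ (the +1 eigenvector of (X−Z)/√2), |+⟩ = (|0⟩+|1⟩)/√2, and set σ = V ( |e⟩⟨e| ⊗ |+⟩⟨+| ⊗ ξ ) V†. If Tr[(I₂ ⊗ X ⊗ I_k) σ] = 1 and Tr[(Z ⊗ I₂ ⊗ I_k) σ] = −1, then V_{0,0} = V_{0,1} = V_{1,0} = V_{1,1}. -/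

import Mathlib

/-!
Final step of Theorem 1 (collapse of the blocks): if
`V = Σ_{a,b} |φ_{a,b}⟩⟨ā, b| ⊗ V_{a,b}` is unitary, `ξ` is a full-rank state on `ℂ^k`,
`σ = V (|e⟩⟨e| ⊗ |+⟩⟨+| ⊗ ξ) V†`, and `Tr[(I ⊗ X ⊗ I) σ] = 1`,
`Tr[(Z ⊗ I ⊗ I) σ] = −1`, then all four blocks `V_{a,b}` coincide.
-/

open Matrix Finset
open scoped Matrix Kronecker ComplexOrder

noncomputable section

def PauliX : Matrix (Fin 2) (Fin 2) ℂ := !![0, 1; 1, 0]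

def PauliZ : Matrix (Fin 2) (Fin 2) ℂ := !![1, 0; 0, -1]

/-- The Bell state `|φ_{a,b}⟩ = (|a b⟩ + (−1)^a |1−a, 1−b⟩)/√2`. -/
def bellVec (a b : Fin 2) : Fin 2 × Fin 2 → ℂ := fun p =>
  (Real.sqrt 2 : ℂ)⁻¹ *
    ((if p = (a, b) then 1 else 0) +
      (-1 : ℂ) ^ (a : ℕ) * (if p = (a + 1, b + 1) then 1 else 0))

/-- Computational basis vector `|a⟩` of `ℂ²`. -/
def ketF (a : Fin 2) : Fin 2 → ℂ := fun i => if i = a then 1 else 0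

/-- `|0̄⟩, |1̄⟩`: the eigenvectors of `(X+Z)/√2`. -/
def barKet : Fin 2 → Fin 2 → ℂ :=
  ![![(Real.cos (Real.pi / 8) : ℂ), (Real.sin (Real.pi / 8) : ℂ)],
    ![-(Real.sin (Real.pi / 8) : ℂ), (Real.cos (Real.pi / 8) : ℂ)]]

/-- Kronecker product of two vectors in `ℂ²`. -/
def vkron (u v : Fin 2 → ℂ) : Fin 2 × Fin 2 → ℂ := fun p => u p.1 * v p.2

/-- `|e⟩ = sin(π/8)|0⟩ + cos(π/8)|1⟩`, the `+1` eigenvector of `(X−Z)/√2`. -/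
def eKet : Fin 2 → ℂ := ![(Real.sin (Real.pi / 8) : ℂ), (Real.cos (Real.pi / 8) : ℂ)]

/-- `|+⟩ = (|0⟩+|1⟩)/√2`. -/
def plusKet : Fin 2 → ℂ := fun _ => (Real.sqrt 2 : ℂ)⁻¹

/-!
Write `ψ = e ⊗ +` and `G_X = I ⊗ X ⊗ I`, `G_Z = Z ⊗ I ⊗ I`. Since `σ` is a state and `G_X` is a
Hermitian involution, `Tr[G_X σ] = 1 = Tr σ` forces `G_X σ = σ`; likewise `G_Z σ = -σ`.
As `ξ` is invertible and `V` is unitary, the range of `σ = V (|ψ⟩⟨ψ| ⊗ ξ) V†` contains that of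
`V (|ψ⟩ ⊗ I) = ½ Σ_{a,b} |φ_{a,b}⟩ ⊗ V_{a,b}`, because every overlap `⟨ā, b|ψ⟩` equals `½`.
On Bell states `I ⊗ X` acts as `φ_{a,b} ↦ φ_{a,b+1}` and `Z ⊗ I` as `φ_{a,b} ↦ -φ_{a+1,b+1}`,
so by orthonormality of the Bell basis `V_{a,b+1} = V_{a,b}` and `V_{a+1,b+1} = V_{a,b}`.
-/

namespace Matrix

open scoped MatrixOrder in
theorem PosSemidef.mul_eq_self_of_trace_mul_eq {𝕜 n : Type*} [RCLike 𝕜] [Fintype n]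
    [DecidableEq n] {G σ : Matrix n n 𝕜} (hσ : σ.PosSemidef) (hG : G.IsHermitian)
    (hGG : G * G = 1) (h : (G * σ).trace = σ.trace) : G * σ = σ := by
  obtain ⟨B, rfl⟩ := CStarAlgebra.nonneg_iff_eq_star_mul_self.mp hσ.nonneg
  rw [star_eq_conjTranspose] at h ⊢
  -- `(1 - G)ᴴ (1 - G) = 2 (1 - G)`, so `‖(1 - G) Bᴴ‖² = 2 Tr((1 - G) Bᴴ B) = 0`.
  have hsq : (1 - G)ᴴ * (1 - G) = (2 : 𝕜) • (1 - G) := by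
    rw [conjTranspose_sub, conjTranspose_one, hG.eq, sub_mul, mul_sub, mul_sub, hGG, two_smul]
    noncomm_ring
  have hzero : (1 - G) * Bᴴ = 0 := by
    rw [← trace_conjTranspose_mul_self_eq_zero_iff, conjTranspose_mul,
      conjTranspose_conjTranspose, mul_assoc, ← mul_assoc (1 - G)ᴴ, hsq, trace_mul_comm,
      mul_assoc, smul_mul_assoc, trace_smul, sub_mul, trace_sub, one_mul, h, sub_self, smul_zero]
  calc G * (Bᴴ * B) = Bᴴ * B - (1 - G) * Bᴴ * B := by noncomm_ring
    _ = Bᴴ * B := by rw [hzero, zero_mul, sub_zero]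

theorem mul_eq_self_of_smul_eq_mul {R l n : Type*} [Field R] [Fintype l]
    {G σ : Matrix l l R} {B W : Matrix l n R} {c : R} (hG : G * σ = σ)
    (hB : c • B = σ * W) (hc : c ≠ 0) : G * B = B := by
  refine smul_right_injective _ hc ?_
  simp only [← Matrix.mul_smul, hB, ← Matrix.mul_assoc, hG]

theorem IsHermitian.kronecker {R m n : Type*} [CommRing R] [StarRing R]
    {A : Matrix m m R} {B : Matrix n n R} (hA : A.IsHermitian) (hB : B.IsHermitian) :
    (A ⊗ₖ B).IsHermitian := by
  rw [IsHermitian, conjTranspose_kronecker, hA.eq, hB.eq]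

theorem kronecker_mul_self_eq_one {R m n : Type*} [CommSemiring R] [Fintype m] [Fintype n]
    [DecidableEq m] [DecidableEq n] {A : Matrix m m R} {B : Matrix n n R} (hA : A * A = 1)
    (hB : B * B = 1) : A ⊗ₖ B * A ⊗ₖ B = 1 := by
  rw [← mul_kronecker_mul, hA, hB, one_kronecker_one]

theorem vecMulVec_mul_replicateCol {R l m ι : Type*} [CommSemiring R] [Fintype m]
    (u : l → R) (v w : m → R) :
    vecMulVec u v * replicateCol ι w = (v ⬝ᵥ w) • replicateCol ι u := by
  ext
  simp [mul_apply, vecMulVec_apply, replicateCol_apply, dotProduct, Finset.mul_sum, mul_comm,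
    mul_left_comm]

end Matrix

section PureStateKronecker

variable {l m : Type*} [Fintype l] [Fintype m] [DecidableEq l] [DecidableEq m]
  {V : Matrix (l × m) (l × m) ℂ}

theorem trace_conj_pureState_kronecker (hV : Vᴴ * V = 1) (ψ : l → ℂ) (ξ : Matrix m m ℂ) :
    (V * (vecMulVec ψ (star ψ) ⊗ₖ ξ) * Vᴴ).trace = (star ψ ⬝ᵥ ψ) * ξ.trace := by
  rw [trace_mul_comm, ← Matrix.mul_assoc, hV, Matrix.one_mul, trace_kronecker, trace_vecMulVec,
    dotProduct_comm]

theorem conj_pureState_kronecker_mul (hV : Vᴴ * V = 1) {ψ : l → ℂ}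
    (hψ : star ψ ⬝ᵥ ψ = 1) {ξ : Matrix m m ℂ} (hξ : IsUnit ξ) :
    V * (vecMulVec ψ (star ψ) ⊗ₖ ξ) * Vᴴ * (V * (replicateCol Unit ψ ⊗ₖ ξ⁻¹)) =
      V * (replicateCol Unit ψ ⊗ₖ (1 : Matrix m m ℂ)) := by
  rw [Matrix.mul_assoc, Matrix.mul_assoc, ← Matrix.mul_assoc Vᴴ, hV, Matrix.one_mul,
    ← mul_kronecker_mul, vecMulVec_mul_replicateCol, hψ, one_smul,
    mul_nonsing_inv ξ ((isUnit_iff_isUnit_det ξ).mp hξ)]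

end PureStateKronecker

theorem pauliX_isHermitian : PauliX.IsHermitian := by
  ext i j; fin_cases i <;> fin_cases j <;> simp [PauliX]

theorem pauliZ_isHermitian : PauliZ.IsHermitian := by
  ext i j; fin_cases i <;> fin_cases j <;> simp [PauliZ]

theorem pauliX_mul_self : PauliX * PauliX = 1 := by
  ext i j; fin_cases i <;> fin_cases j <;> simp [PauliX, mul_apply, one_apply]

theorem pauliZ_mul_self : PauliZ * PauliZ = 1 := by
  ext i j; fin_cases i <;> fin_cases j <;> simp [PauliZ, mul_apply, one_apply]

theorem inv_sqrt_two_mul_self : (Real.sqrt 2 : ℂ)⁻¹ * (Real.sqrt 2 : ℂ)⁻¹ = 2⁻¹ := by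
  rw [← mul_inv, ← Complex.ofReal_mul, Real.mul_self_sqrt zero_le_two]; norm_num

theorem star_bellVec_dotProduct_bellVec (a b c d : Fin 2) :
    star (bellVec a b) ⬝ᵥ bellVec c d = if (a, b) = (c, d) then 1 else 0 := by
  fin_cases a <;> fin_cases b <;> fin_cases c <;> fin_cases d <;>
    simp [dotProduct, Fintype.sum_prod_type, bellVec, Prod.ext_iff, inv_sqrt_two_mul_self] <;>
    norm_num

theorem one_kronecker_pauliX_mulVec_bellVec (a b : Fin 2) :
    ((1 : Matrix (Fin 2) (Fin 2) ℂ) ⊗ₖ PauliX) *ᵥ bellVec a b = bellVec a (b + 1) := by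
  funext p
  fin_cases a <;> fin_cases b <;> fin_cases p <;>
    simp [mulVec, dotProduct, Fintype.sum_prod_type, bellVec, PauliX, one_apply, Prod.ext_iff]

theorem pauliZ_kronecker_one_mulVec_bellVec (a b : Fin 2) :
    (PauliZ ⊗ₖ (1 : Matrix (Fin 2) (Fin 2) ℂ)) *ᵥ bellVec a b = -bellVec (a + 1) (b + 1) := by
  funext p
  fin_cases a <;> fin_cases b <;> fin_cases p <;>
    simp [mulVec, dotProduct, Fintype.sum_prod_type, bellVec, PauliZ, one_apply, Prod.ext_iff]

section BellBlocks

variable {m n : Type*}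

def bellBlocks (N : Fin 2 → Fin 2 → Matrix m n ℂ) : Matrix ((Fin 2 × Fin 2) × m) (Unit × n) ℂ :=
  ∑ a, ∑ b, replicateCol Unit (bellVec a b) ⊗ₖ N a b

theorem bellBlocks_apply (N : Fin 2 → Fin 2 → Matrix m n ℂ) (p : Fin 2 × Fin 2) (i : m)
    (u : Unit) (j : n) : bellBlocks N (p, i) (u, j) = ∑ a, ∑ b, bellVec a b p * N a b i j := by
  simp [bellBlocks, Matrix.sum_apply, replicateCol_apply]

theorem sum_star_bellVec_mul_bellBlocks_apply (N : Fin 2 → Fin 2 → Matrix m n ℂ) (a b : Fin 2)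
    (i : m) (j : n) : ∑ p, star (bellVec a b p) * bellBlocks N (p, i) ((), j) = N a b i j := by
  simp_rw [bellBlocks_apply, Finset.mul_sum, ← mul_assoc]
  rw [Finset.sum_comm]
  simp_rw [Finset.sum_comm (γ := Fin 2 × Fin 2), ← Finset.sum_mul]
  have horth := star_bellVec_dotProduct_bellVec a b
  simp only [dotProduct, Pi.star_apply] at horth
  simp_rw [horth, ite_mul, one_mul, zero_mul, Prod.mk.injEq, ite_and]
  simp

theorem bellBlocks_injective : Function.Injective (bellBlocks (m := m) (n := n)) := by
  intro N M h
  ext a b i j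
  rw [← sum_star_bellVec_mul_bellBlocks_apply N, h, sum_star_bellVec_mul_bellBlocks_apply]

theorem sum_replicateCol_bellVec_add_kronecker (N : Fin 2 → Fin 2 → Matrix m n ℂ)
    (c d : Fin 2) :
    ∑ a, ∑ b, replicateCol Unit (bellVec (a + c) (b + d)) ⊗ₖ N a b =
      bellBlocks (fun a b => N (a + c) (b + d)) := by
  have hshift : ∀ x y : Fin 2, x + y + y = x := by decide
  rw [bellBlocks, ← Equiv.sum_comp (Equiv.addRight c)]
  refine Finset.sum_congr rfl fun a _ => ?_
  rw [← Equiv.sum_comp (Equiv.addRight d)]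
  simp [hshift]

variable [Fintype m] [DecidableEq m]

theorem kronecker_one_mul_bellBlocks (A : Matrix (Fin 2 × Fin 2) (Fin 2 × Fin 2) ℂ)
    (N : Fin 2 → Fin 2 → Matrix m n ℂ) :
    A ⊗ₖ (1 : Matrix m m ℂ) * bellBlocks N =
      ∑ a, ∑ b, replicateCol Unit (A *ᵥ bellVec a b) ⊗ₖ N a b := by
  simp only [bellBlocks, Matrix.mul_sum, ← mul_kronecker_mul, Matrix.one_mul, replicateCol_mulVec]

theorem pauliX_mul_bellBlocks (N : Fin 2 → Fin 2 → Matrix m n ℂ) :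
    ((1 : Matrix (Fin 2) (Fin 2) ℂ) ⊗ₖ PauliX) ⊗ₖ (1 : Matrix m m ℂ) * bellBlocks N =
      bellBlocks (fun a b => N a (b + 1)) := by
  rw [kronecker_one_mul_bellBlocks]
  simp_rw [one_kronecker_pauliX_mulVec_bellVec]
  simpa using sum_replicateCol_bellVec_add_kronecker N 0 1

theorem pauliZ_mul_bellBlocks (N : Fin 2 → Fin 2 → Matrix m n ℂ) :
    (PauliZ ⊗ₖ (1 : Matrix (Fin 2) (Fin 2) ℂ)) ⊗ₖ (1 : Matrix m m ℂ) * bellBlocks N =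
      -bellBlocks (fun a b => N (a + 1) (b + 1)) := by
  rw [kronecker_one_mul_bellBlocks, ← sum_replicateCol_bellVec_add_kronecker]
  have hneg : ∀ (v : Fin 2 × Fin 2 → ℂ) (M : Matrix m n ℂ),
      replicateCol Unit (-v) ⊗ₖ M = -(replicateCol Unit v ⊗ₖ M) := by
    intro v M
    ext
    simp [replicateCol_apply]
  simp_rw [pauliZ_kronecker_one_mulVec_bellVec, hneg, Finset.sum_neg_distrib]

end BellBlocks

theorem star_vkron_dotProduct_vkron (u v u' v' : Fin 2 → ℂ) :
    star (vkron u v) ⬝ᵥ vkron u' v' = (star u ⬝ᵥ u') * (star v ⬝ᵥ v') := by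
  simp only [dotProduct, Fintype.sum_prod_type, Fin.sum_univ_two, vkron, Pi.star_apply, star_mul']
  ring

theorem star_barKet_dotProduct_eKet (a : Fin 2) :
    star (barKet a) ⬝ᵥ eKet = (Real.sqrt 2 : ℂ)⁻¹ := by
  have hsin : 2 * Real.sin (Real.pi / 8) * Real.cos (Real.pi / 8) = Real.sqrt 2 / 2 := by
    rw [← Real.sin_two_mul, ← Real.sin_pi_div_four]; ring_nf
  have hcos : Real.cos (Real.pi / 8) ^ 2 - Real.sin (Real.pi / 8) ^ 2 = Real.sqrt 2 / 2 := by
    rw [← Real.cos_pi_div_four, show Real.pi / 4 = 2 * (Real.pi / 8) by ring, Real.cos_two_mul]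
    linarith [Real.sin_sq_add_cos_sq (Real.pi / 8)]
  rw [← Complex.ofReal_inv, inv_eq_one_div, ← Real.sqrt_div_self']
  fin_cases a
  · simp only [dotProduct, Fin.sum_univ_two, barKet, eKet, Pi.star_apply, cons_val_zero,
      cons_val_one, Complex.star_def, Complex.conj_ofReal, Fin.zero_eta, Fin.isValue]
    rw [← hsin]; push_cast; ring
  · simp only [dotProduct, Fin.sum_univ_two, barKet, eKet, Pi.star_apply, cons_val_zero,
      cons_val_one, Complex.star_def, Complex.conj_ofReal, map_neg, Fin.mk_one, Fin.isValue]
    rw [← hcos]; push_cast; ring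

theorem star_ketF_dotProduct_plusKet (b : Fin 2) :
    star (ketF b) ⬝ᵥ plusKet = (Real.sqrt 2 : ℂ)⁻¹ := by
  simp [dotProduct, ketF, plusKet]

theorem star_eKet_dotProduct_eKet : star eKet ⬝ᵥ eKet = 1 := by
  simp only [dotProduct, Fin.sum_univ_two, eKet, Pi.star_apply, cons_val_zero, cons_val_one,
    Complex.star_def, Complex.conj_ofReal, Fin.isValue]
  exact_mod_cast by linear_combination Real.sin_sq_add_cos_sq (Real.pi / 8)

theorem star_plusKet_dotProduct_plusKet : star plusKet ⬝ᵥ plusKet = 1 := by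
  simp [dotProduct, plusKet, inv_sqrt_two_mul_self]

theorem star_vkron_eKet_plusKet_dotProduct_self :
    star (vkron eKet plusKet) ⬝ᵥ vkron eKet plusKet = 1 := by
  rw [star_vkron_dotProduct_vkron, star_eKet_dotProduct_eKet, star_plusKet_dotProduct_plusKet,
    one_mul]

theorem sum_bellVec_barKet_kronecker_mul {m n : Type*} [Fintype n] [DecidableEq n]
    (N : Fin 2 → Fin 2 → Matrix m n ℂ) :
    (∑ a : Fin 2, ∑ b : Fin 2,
        vecMulVec (bellVec a b) (star (vkron (barKet a) (ketF b))) ⊗ₖ N a b) *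
      (replicateCol Unit (vkron eKet plusKet) ⊗ₖ (1 : Matrix n n ℂ)) =
      (2⁻¹ : ℂ) • bellBlocks N := by
  simp only [Matrix.sum_mul, ← mul_kronecker_mul, vecMulVec_mul_replicateCol,
    star_vkron_dotProduct_vkron, star_barKet_dotProduct_eKet, star_ketF_dotProduct_plusKet,
    inv_sqrt_two_mul_self, smul_kronecker, Matrix.mul_one, bellBlocks, Finset.smul_sum]

theorem collapse_of_blocks_general (k : ℕ)
    (Vm : Fin 2 → Fin 2 → Matrix (Fin k) (Fin k) ℂ)
    (V : Matrix ((Fin 2 × Fin 2) × Fin k) ((Fin 2 × Fin 2) × Fin k) ℂ)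
    (hVdef : V = ∑ a : Fin 2, ∑ b : Fin 2,
        (vecMulVec (bellVec a b) (star (vkron (barKet a) (ketF b)))) ⊗ₖ Vm a b)
    (hVunitary : V ∈ Matrix.unitaryGroup ((Fin 2 × Fin 2) × Fin k) ℂ)
    (ξ : Matrix (Fin k) (Fin k) ℂ) (hξ : ξ.PosDef) (hξtr : ξ.trace = 1)
    (σ : Matrix ((Fin 2 × Fin 2) × Fin k) ((Fin 2 × Fin 2) × Fin k) ℂ)
    (hσdef : σ = V * ((vecMulVec (vkron eKet plusKet) (star (vkron eKet plusKet))) ⊗ₖ ξ) * Vᴴ)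
    (hX : ((((1 : Matrix (Fin 2) (Fin 2) ℂ) ⊗ₖ PauliX) ⊗ₖ (1 : Matrix (Fin k) (Fin k) ℂ))
        * σ).trace = 1)
    (hZ : (((PauliZ ⊗ₖ (1 : Matrix (Fin 2) (Fin 2) ℂ)) ⊗ₖ (1 : Matrix (Fin k) (Fin k) ℂ))
        * σ).trace = -1) :
    Vm 0 0 = Vm 0 1 ∧ Vm 0 0 = Vm 1 0 ∧ Vm 0 0 = Vm 1 1 := by
  have hVV : Vᴴ * V = 1 := by
    simpa [star_eq_conjTranspose] using mem_unitaryGroup_iff'.mp hVunitary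
  have hσpsd : σ.PosSemidef := hσdef ▸
    ((posSemidef_vecMulVec_self_star _).kronecker hξ.posSemidef).mul_mul_conjTranspose_same V
  have hσtr : σ.trace = 1 := by
    rw [hσdef, trace_conj_pureState_kronecker hVV, star_vkron_eKet_plusKet_dotProduct_self, hξtr,
      one_mul]
  have hrange : (2⁻¹ : ℂ) • bellBlocks Vm =
      σ * (V * (replicateCol Unit (vkron eKet plusKet) ⊗ₖ ξ⁻¹)) := by
    rw [hσdef, conj_pureState_kronecker_mul hVV star_vkron_eKet_plusKet_dotProduct_self
      hξ.isUnit, hVdef, sum_bellVec_barKet_kronecker_mul]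
  have hXfix := hσpsd.mul_eq_self_of_trace_mul_eq
    ((isHermitian_one.kronecker pauliX_isHermitian).kronecker isHermitian_one)
    (kronecker_mul_self_eq_one (kronecker_mul_self_eq_one (mul_one 1) pauliX_mul_self)
      (mul_one 1)) (by rw [hX, hσtr])
  have hZfix := hσpsd.mul_eq_self_of_trace_mul_eq
    ((pauliZ_isHermitian.kronecker isHermitian_one).kronecker isHermitian_one).neg
    ((neg_mul_neg _ _).trans (kronecker_mul_self_eq_one
      (kronecker_mul_self_eq_one pauliZ_mul_self (mul_one 1)) (mul_one 1)))
    (by rw [Matrix.neg_mul, trace_neg, hZ, hσtr, neg_neg])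
  have hXshift : (fun a b => Vm a (b + 1)) = Vm := bellBlocks_injective <| by
    rw [← pauliX_mul_bellBlocks, mul_eq_self_of_smul_eq_mul hXfix hrange (by norm_num)]
  have hZshift : (fun a b => Vm (a + 1) (b + 1)) = Vm := bellBlocks_injective <| by
    rw [← neg_neg (bellBlocks _), ← pauliZ_mul_bellBlocks, ← Matrix.neg_mul,
      mul_eq_self_of_smul_eq_mul hZfix hrange (by norm_num)]
  exact ⟨(congrFun₂ hXshift 0 0).symm, (congrFun₂ hZshift 1 1).trans (congrFun₂ hXshift 1 0),
    congrFun₂ hZshift 1 1⟩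

theorem collapse_of_blocks (k : ℕ) (hk : 1 ≤ k)
    (Vm : Fin 2 → Fin 2 → Matrix (Fin k) (Fin k) ℂ)
    (V : Matrix ((Fin 2 × Fin 2) × Fin k) ((Fin 2 × Fin 2) × Fin k) ℂ)
    (hVdef : V = ∑ a : Fin 2, ∑ b : Fin 2,
        (vecMulVec (bellVec a b) (star (vkron (barKet a) (ketF b)))) ⊗ₖ Vm a b)
    (hVunitary : V ∈ Matrix.unitaryGroup ((Fin 2 × Fin 2) × Fin k) ℂ)
    (ξ : Matrix (Fin k) (Fin k) ℂ) (hξ : ξ.PosDef) (hξtr : ξ.trace = 1)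
    (σ : Matrix ((Fin 2 × Fin 2) × Fin k) ((Fin 2 × Fin 2) × Fin k) ℂ)
    (hσdef : σ = V * ((vecMulVec (vkron eKet plusKet) (star (vkron eKet plusKet))) ⊗ₖ ξ) * Vᴴ)
    (hX : ((((1 : Matrix (Fin 2) (Fin 2) ℂ) ⊗ₖ PauliX) ⊗ₖ (1 : Matrix (Fin k) (Fin k) ℂ))
        * σ).trace = 1)
    (hZ : (((PauliZ ⊗ₖ (1 : Matrix (Fin 2) (Fin 2) ℂ)) ⊗ₖ (1 : Matrix (Fin k) (Fin k) ℂ))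
        * σ).trace = -1) :
    Vm 0 0 = Vm 0 1 ∧ Vm 0 0 = Vm 1 0 ∧ Vm 0 0 = Vm 1 1 :=
  collapse_of_blocks_general k Vm V hVdef hVunitary ξ hξ hξtr σ hσdef hX hZ

end
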